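/- arXiv:1408.6062 — 2 statements merged into one kernel-verified Lean document; each statement's English description precedes it below -/
import Mathlib

section
/- The map f : ℂ³ → ℝ³ given by f(z₁,z₂,z₃) = (Im(z₁z₂z₃), |z₁|² − |z₂|², |z₁|² − |z₃|²) has Lagrangian fibers over regular values: at every point where f is a submersion, the three differentials d(Im(z₁z₂z₃)), d(|z₁|² − |z₂|²), d(|z₁|² − |z₃|²) annihilate each other pairwise under the standard symplectic form ω = Σᵢ dxᵢ ∧ dyᵢ on ℂ³ ≅ ℝ⁶, i.e. the Poisson brackets {fᵢ, fⱼ} vanish for all i, j. -/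
open scoped BigOperators

/-- The Poisson bracket of two smooth real functions on `ℂⁿ ≅ ℝ²ⁿ` with respect to the
standard symplectic form `ω = Σᵢ dxᵢ ∧ dyᵢ`:
`{g,h} = Σᵢ (∂g/∂xᵢ ∂h/∂yᵢ − ∂g/∂yᵢ ∂h/∂xᵢ)`. -/
noncomputable def poisson {n : ℕ} (g h : (Fin n → ℂ) → ℝ) (z : Fin n → ℂ) : ℝ :=
  ∑ i, (fderiv ℝ g z (Pi.single i 1) * fderiv ℝ h z (Pi.single i Complex.I)
      - fderiv ℝ g z (Pi.single i Complex.I) * fderiv ℝ h z (Pi.single i 1))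

/-- The Harvey–Lawson map `f(z₁,z₂,z₃) = (Im(z₁z₂z₃), |z₁|²−|z₂|², |z₁|²−|z₃|²)`,
given by its three component functions. -/
noncomputable def harveyLawson : Fin 3 → ((Fin 3 → ℂ) → ℝ)
  | 0 => fun z => (z 0 * z 1 * z 2).im
  | 1 => fun z => Complex.normSq (z 0) - Complex.normSq (z 1)
  | 2 => fun z => Complex.normSq (z 0) - Complex.normSq (z 2)


open Complex in
private noncomputable def Dn (i : Fin 3) (z : Fin 3 → ℂ) : (Fin 3 → ℂ) →L[ℝ] ℝ :=
  (2 * (z i).re) • (Complex.reCLM.comp (ContinuousLinearMap.proj i))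
    + (2 * (z i).im) • (Complex.imCLM.comp (ContinuousLinearMap.proj i))

private lemma hNsq (i : Fin 3) (z : Fin 3 → ℂ) :
    HasFDerivAt (fun z : Fin 3 → ℂ => Complex.normSq (z i)) (Dn i z) z := by
  have hre := (Complex.reCLM.comp (ContinuousLinearMap.proj (R := ℝ) (φ := fun _ : Fin 3 => ℂ) i)).hasFDerivAt (x := z)
  have him := (Complex.imCLM.comp (ContinuousLinearMap.proj (R := ℝ) (φ := fun _ : Fin 3 => ℂ) i)).hasFDerivAt (x := z)
  have h : HasFDerivAt (fun z : Fin 3 → ℂ => Complex.normSq (z i)) _ z := (hre.mul hre).add (him.mul him)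
  refine h.congr_fderiv ?_
  ext v; simp [Dn, ContinuousLinearMap.proj_apply]; ring

private lemma fdN' (i j : Fin 3) (z v : Fin 3 → ℂ) :
    fderiv ℝ (fun z : Fin 3 → ℂ => Complex.normSq (z i) - Complex.normSq (z j)) z v
      = 2 * ((z i).re * (v i).re + (z i).im * (v i).im)
        - 2 * ((z j).re * (v j).re + (z j).im * (v j).im) := by
  rw [HasFDerivAt.fderiv (f := fun z : Fin 3 → ℂ => Complex.normSq (z i) - Complex.normSq (z j)) ((hNsq i z).sub (hNsq j z))]
  simp [Dn, ContinuousLinearMap.proj_apply]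
  ring

private lemma fd0 (z v : Fin 3 → ℂ) :
    fderiv ℝ (fun z : Fin 3 → ℂ => (z 0 * z 1 * z 2).im) z v
      = (v 0 * z 1 * z 2 + z 0 * v 1 * z 2 + z 0 * z 1 * v 2).im := by
  have h := (((ContinuousLinearMap.proj (R := ℝ) (φ := fun _ : Fin 3 => ℂ) 0).hasFDerivAt (x := z)).mul
    ((ContinuousLinearMap.proj (R := ℝ) (φ := fun _ : Fin 3 => ℂ) 1).hasFDerivAt (x := z))).mul
    ((ContinuousLinearMap.proj (R := ℝ) (φ := fun _ : Fin 3 => ℂ) 2).hasFDerivAt (x := z))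
  have h3 : HasFDerivAt (fun z : Fin 3 → ℂ => (z 0 * z 1 * z 2).im) _ z :=
    Complex.imCLM.hasFDerivAt.comp z h
  rw [h3.fderiv]
  simp [ContinuousLinearMap.proj_apply, Complex.add_im, Complex.mul_im]
  ring

/-- at every point where the Harvey–Lawson map is a submersion, the pairwise
Poisson brackets of its components vanish (so the fibers over regular values are
Lagrangian). -/
theorem harveyLawson_poisson_brackets_vanish
    (z : Fin 3 → ℂ)
    (hsub : Function.Surjective
      (fun v : Fin 3 → ℂ => fun k : Fin 3 => fderiv ℝ (harveyLawson k) z v)) :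
    ∀ i j : Fin 3, poisson (harveyLawson i) (harveyLawson j) z = 0 := by
  intro i j
  fin_cases i <;> fin_cases j <;>
  · simp only [poisson, Fin.sum_univ_three, harveyLawson, fd0, fdN', Pi.single_apply]
    norm_num (config := { decide := true }) [Complex.mul_im, Complex.mul_re, Complex.add_im]
    ring
end

section
/- On the fibers of the Harvey–Lawson fibration, the imaginary part of the holomorphic volume form is calibrating-compatible in the following sense: the restriction of Im(dz₁ ∧ dz₂ ∧ dz₃) to any smooth fiber of f over a regular value vanishes, where f(z₁,z₂,z₃) = (Im(z₁z₂z₃), |z₁|² − |z₂|², |z₁|² − |z₃|²). -/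
open Complex in
noncomputable def hlG (z : Fin 3 → ℂ) : Fin 3 → Fin 3 → ℂ
  | 0 => ![Complex.I * (starRingEnd ℂ) (z 1 * z 2), Complex.I * (starRingEnd ℂ) (z 0 * z 2),
      Complex.I * (starRingEnd ℂ) (z 0 * z 1)]
  | 1 => ![2 * z 0, -(2 * z 1), 0]
  | 2 => ![2 * z 0, 0, -(2 * z 2)]

noncomputable def hlD (z : Fin 3 → ℂ) (k : Fin 3) (v : Fin 3 → ℂ) : ℝ :=
  ∑ j, ((starRingEnd ℂ) (hlG z k j) * v j).re

lemma hl_fderiv (z : Fin 3 → ℂ) (k : Fin 3) (w : Fin 3 → ℂ) :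
    fderiv ℝ (harveyLawson k) z w = hlD z k w := by
  have P : ∀ j : Fin 3, HasFDerivAt (fun u : Fin 3 → ℂ => u j)
      (ContinuousLinearMap.proj (R := ℝ) (φ := fun _ : Fin 3 => ℂ) j) z :=
    fun j => (ContinuousLinearMap.proj (R := ℝ) (φ := fun _ : Fin 3 => ℂ) j).hasFDerivAt
  have C : ∀ j : Fin 3, HasFDerivAt (fun u : Fin 3 → ℂ => (starRingEnd ℂ) (u j))
      ((Complex.conjCLE.toContinuousLinearMap).comp
        (ContinuousLinearMap.proj (R := ℝ) (φ := fun _ : Fin 3 => ℂ) j)) z :=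
    fun j => ((Complex.conjCLE.toContinuousLinearMap).comp
        (ContinuousLinearMap.proj (R := ℝ) (φ := fun _ : Fin 3 => ℂ) j)).hasFDerivAt
  fin_cases k
  · show fderiv ℝ (harveyLawson 0) z w = hlD z 0 w
    have hm := ((P 0).mul (P 1)).mul (P 2)
    have h := Complex.imCLM.hasFDerivAt.comp z hm
    have h' : HasFDerivAt (harveyLawson 0) _ z := h
    rw [h'.fderiv]
    simp [hlD, hlG, Fin.sum_univ_three, Complex.ext_iff, Complex.mul_re, Complex.mul_im]
    ring
  · show fderiv ℝ (harveyLawson 1) z w = hlD z 1 w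
    have hre : harveyLawson 1 = fun u : Fin 3 → ℂ =>
        (u 0 * (starRingEnd ℂ) (u 0)).re - (u 1 * (starRingEnd ℂ) (u 1)).re := by
      funext u; simp [harveyLawson, Complex.mul_conj]
    have hm0 := (P 0).mul (C 0)
    have hm1 := (P 1).mul (C 1)
    have h := (Complex.reCLM.hasFDerivAt.comp z hm0).sub (Complex.reCLM.hasFDerivAt.comp z hm1)
    have h' : HasFDerivAt (fun u : Fin 3 → ℂ =>
        (u 0 * (starRingEnd ℂ) (u 0)).re - (u 1 * (starRingEnd ℂ) (u 1)).re) _ z := h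
    rw [hre, h'.fderiv]
    simp [hlD, hlG, Fin.sum_univ_three, Complex.mul_re, Complex.mul_im]
    ring
  · show fderiv ℝ (harveyLawson 2) z w = hlD z 2 w
    have hre : harveyLawson 2 = fun u : Fin 3 → ℂ =>
        (u 0 * (starRingEnd ℂ) (u 0)).re - (u 2 * (starRingEnd ℂ) (u 2)).re := by
      funext u; simp [harveyLawson, Complex.mul_conj]
    have hm0 := (P 0).mul (C 0)
    have hm2 := (P 2).mul (C 2)
    have h := (Complex.reCLM.hasFDerivAt.comp z hm0).sub (Complex.reCLM.hasFDerivAt.comp z hm2)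
    have h' : HasFDerivAt (fun u : Fin 3 → ℂ =>
        (u 0 * (starRingEnd ℂ) (u 0)).re - (u 2 * (starRingEnd ℂ) (u 2)).re) _ z := h
    rw [hre, h'.fderiv]
    simp [hlD, hlG, Fin.sum_univ_three, Complex.mul_re, Complex.mul_im]
    ring

noncomputable def hlT (z : Fin 3 → ℂ) : (Fin 3 → ℂ) →ₗ[ℝ] (Fin 3 → ℝ) where
  toFun v := fun k => hlD z k v
  map_add' a b := by
    funext k
    simp [hlD, mul_add, Finset.sum_add_distrib]
  map_smul' r a := by
    funext k
    simp only [hlD, Pi.smul_apply, RingHom.id_apply, smul_eq_mul, Finset.mul_sum]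
    refine Finset.sum_congr rfl fun j _ => ?_
    rw [Complex.real_smul, show (starRingEnd ℂ) (hlG z k j) * ((r : ℂ) * a j)
      = (r : ℂ) * ((starRingEnd ℂ) (hlG z k j) * a j) by ring]
    simp [Complex.mul_re]

/-- on a smooth fiber of the Harvey–Lawson fibration (i.e. at a point where
`f` is a submersion), the restriction of `Im(dz₁ ∧ dz₂ ∧ dz₃)` to the tangent space of the
fiber (the kernel of `df`) vanishes: for tangent vectors `v₀,v₁,v₂` to the fiber,
`Im(det[vₖ j]) = 0`, where `det[vₖ j]` is the value of `dz₁∧dz₂∧dz₃` on `(v₀,v₁,v₂)`. -/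
theorem harveyLawson_imOmega_vanishes_on_fibers
    (z : Fin 3 → ℂ)
    (hsub : Function.Surjective
      (fun v : Fin 3 → ℂ => fun k : Fin 3 => fderiv ℝ (harveyLawson k) z v))
    (v : Fin 3 → (Fin 3 → ℂ))
    (htang : ∀ m k : Fin 3, fderiv ℝ (harveyLawson k) z (v m) = 0) :
    (Matrix.det (fun j m : Fin 3 => v m j)).im = 0 := by
  classical
  set T := hlT z with hT
  have hTapp : ∀ w k, T w k = hlD z k w := fun w k => rfl
  have hTsurj : Function.Surjective T := by
    intro a
    obtain ⟨w, hw⟩ := hsub a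
    refine ⟨w, funext fun k => ?_⟩
    rw [hTapp, ← hl_fderiv]
    exact congrFun hw k
  have hgind : ∀ a : Fin 3 → ℝ, (∀ j, ∑ k, (a k : ℂ) * hlG z k j = 0) → ∀ k, a k = 0 := by
    intro a ha
    obtain ⟨w, hw⟩ := hTsurj a
    have key : ∑ k, a k * hlD z k w = 0 := by
      have step : ∑ k, a k * hlD z k w
          = ∑ j, ((starRingEnd ℂ) (∑ k, (a k : ℂ) * hlG z k j) * w j).re := by
        simp only [hlD, Finset.mul_sum]
        rw [Finset.sum_comm]
        refine Finset.sum_congr rfl fun j _ => ?_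
        rw [map_sum, Finset.sum_mul, Complex.re_sum]
        refine Finset.sum_congr rfl fun k _ => ?_
        rw [map_mul, Complex.conj_ofReal,
          show (a k : ℂ) * (starRingEnd ℂ) (hlG z k j) * w j
            = (a k : ℂ) * ((starRingEnd ℂ) (hlG z k j) * w j) by ring]
        simp [Complex.mul_re]
      rw [step]
      simp [ha]
    have hsq : ∑ k, a k * a k = 0 := by
      rw [← key]
      refine Finset.sum_congr rfl fun k _ => ?_
      rw [← hTapp, hw]
    intro k
    have := (Finset.sum_eq_zero_iff_of_nonneg
      (fun i _ => mul_self_nonneg (a i))).mp hsq k (Finset.mem_univ k)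
    exact mul_self_eq_zero.mp this
  set X : Fin 3 → (Fin 3 → ℂ) := fun k j => Complex.I * hlG z k j with hXdef
  have hXker : ∀ k, T (X k) = 0 := by
    intro k
    funext k'
    show hlD z k' (X k) = 0
    fin_cases k <;> fin_cases k' <;>
      simp [hlD, hlG, X, Fin.sum_univ_three, Complex.mul_re, Complex.mul_im] <;> ring
  have hXind : LinearIndependent ℝ X := by
    rw [Fintype.linearIndependent_iff]
    intro a ha k
    refine hgind a (fun j => ?_) k
    have hj := congrFun ha j
    simp only [Finset.sum_apply, Pi.smul_apply, Pi.zero_apply] at hj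
    have hmul : Complex.I * ∑ k, (a k : ℂ) * hlG z k j = 0 := by
      rw [Finset.mul_sum, ← hj]
      refine Finset.sum_congr rfl fun k _ => ?_
      rw [hXdef, Complex.real_smul]
      ring
    rcases mul_eq_zero.mp hmul with h | h
    · exact absurd h Complex.I_ne_zero
    · exact h
  have hrank : Module.finrank ℝ (LinearMap.ker T) = 3 := by
    have h1 := LinearMap.finrank_range_add_finrank_ker T
    have h2 : Module.finrank ℝ (LinearMap.range T) = 3 := by
      rw [LinearMap.range_eq_top.mpr hTsurj, finrank_top]
      simp
    have h3 : Module.finrank ℝ (Fin 3 → ℂ) = 6 := by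
      simp [Module.finrank_pi_fintype, Complex.finrank_real_complex]
    omega
  set XK : Fin 3 → LinearMap.ker T := fun k => ⟨X k, LinearMap.mem_ker.mpr (hXker k)⟩ with hXK
  have hXKind : LinearIndependent ℝ XK :=
    LinearIndependent.of_comp (LinearMap.ker T).subtype hXind
  have hcard : Fintype.card (Fin 3) = Module.finrank ℝ (LinearMap.ker T) := by
    simp [hrank]
  let B := basisOfLinearIndependentOfCardEqFinrank hXKind hcard
  have hB : ∀ k, B k = XK k := fun k => by
    rw [coe_basisOfLinearIndependentOfCardEqFinrank]
  have hvK : ∀ m, v m ∈ LinearMap.ker T := by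
    intro m
    rw [LinearMap.mem_ker]
    funext k
    show hlD z k (v m) = 0
    rw [← hl_fderiv]
    exact htang m k
  set c : Fin 3 → Fin 3 → ℝ := fun m k => B.repr ⟨v m, hvK m⟩ k with hc
  have hv : ∀ m j, v m j = ∑ k, (c m k : ℂ) * X k j := by
    intro m j
    have hsum := B.sum_repr ⟨v m, hvK m⟩
    have hval := congrArg (fun w : LinearMap.ker T => (w : Fin 3 → ℂ) j) hsum
    simp only [Submodule.coe_sum, Submodule.coe_smul, Finset.sum_apply, Pi.smul_apply] at hval
    rw [← hval]
    refine Finset.sum_congr rfl fun k _ => ?_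
    rw [hB k, hXK, Complex.real_smul, hc]
  have hdet : (fun j m : Fin 3 => v m j)
      = (Matrix.of fun j k => X k j) * (Matrix.of fun k m => ((c m k : ℝ) : ℂ)) := by
    funext j m
    show v m j = _
    rw [Matrix.mul_apply, hv m j]
    refine Finset.sum_congr rfl fun k _ => ?_
    simp [Matrix.of_apply, mul_comm]
  rw [hdet, Matrix.det_mul]
  have hdetc : (Matrix.of fun k m => ((c m k : ℝ) : ℂ)).det
      = (((Matrix.of fun k m => c m k).det : ℝ) : ℂ) := by
    exact (RingHom.map_det Complex.ofRealHom (Matrix.of fun k m => c m k)).symm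
  have hImX : (Matrix.det (Matrix.of fun j k => X k j)).im = 0 := by
    rw [Matrix.det_fin_three]
    simp [hXdef, hlG, Matrix.of_apply, Complex.mul_im, Complex.mul_re]
    ring
  rw [hdetc, Complex.mul_im, hImX, Complex.ofReal_im]
  ring
end
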